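/- There exist a unique Φ ∈ K and a unique Θ ∈ ℝ^n solving the algebraic multi-phase Penrose–Fife saddle point problem, i.e. satisfying ⟨AΦ + BᵀΘ − F, V − Φ⟩ ≥ 0 for all V ∈ K together with BΦ − CΘ = G. -/

import Mathlib

/-!
Eliminating `Θ = C⁻¹ (B Φ - G)` through the second equation reduces the saddle point problem
to the variational inequality `0 ≤ ⟪S Φ - f, V - Φ⟫` on `K` for the Schur complement
`S = A + Bᵀ C⁻¹ B`, which is again symmetric positive definite. For such `S` the inequality is
the first-order optimality condition of the energy `⟪S x, x⟫ / 2 - ⟪f, x⟫` on `K`. In finite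
dimension this energy is coercive, so it attains its minimum on the closed set `K`; testing the
inequality at two solutions against each other gives uniqueness.
-/

open scoped RealInnerProductSpace
open Filter

section VariationalInequality

variable {E : Type*} [NormedAddCommGroup E] [InnerProductSpace ℝ E]

lemma inner_map_smul_self (M : E →L[ℝ] E) (c : ℝ) (x : E) :
    ⟪M (c • x), c • x⟫ = c ^ 2 * ⟪M x, x⟫ := by
  rw [map_smul, real_inner_smul_left, real_inner_smul_right]
  ring

lemma exists_pos_mul_sq_norm_le_inner_self [FiniteDimensional ℝ E] (M : E →L[ℝ] E)
    (hpos : ∀ x : E, x ≠ 0 → 0 < ⟪M x, x⟫) :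
    ∃ α > 0, ∀ x : E, α * ‖x‖ ^ 2 ≤ ⟪M x, x⟫ := by
  obtain hempty | hne := (Metric.sphere (0 : E) 1).eq_empty_or_nonempty
  · refine ⟨1, one_pos, fun x => ?_⟩
    obtain rfl : x = 0 := by
      by_contra hx
      exact hempty.subset (mem_sphere_zero_iff_norm.mpr (norm_smul_inv_norm (𝕜 := ℝ) hx))
    simp
  obtain ⟨u, hu, hmin⟩ := (isCompact_sphere (0 : E) 1).exists_isMinOn hne
    (f := fun x => ⟪M x, x⟫) (M.continuous.inner continuous_id).continuousOn
  refine ⟨⟪M u, u⟫, hpos u (ne_zero_of_mem_unit_sphere ⟨u, hu⟩), fun x => ?_⟩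
  rcases eq_or_ne x 0 with rfl | hx
  · simp
  have hx' : 0 < ‖x‖ := norm_pos_iff.mpr hx
  have hu_le : ⟪M u, u⟫ ≤ ‖x‖⁻¹ ^ 2 * ⟪M x, x⟫ := by
    rw [← inner_map_smul_self]
    exact hmin (mem_sphere_zero_iff_norm.mpr (norm_smul_inv_norm (𝕜 := ℝ) hx))
  calc ⟪M u, u⟫ * ‖x‖ ^ 2 ≤ ‖x‖⁻¹ ^ 2 * ⟪M x, x⟫ * ‖x‖ ^ 2 := by gcongr
    _ = ⟪M x, x⟫ := by field_simp

noncomputable def quadraticEnergy (M : E →L[ℝ] E) (f : E) (x : E) : ℝ :=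
  ⟪M x, x⟫ / 2 - ⟪f, x⟫

lemma continuous_quadraticEnergy (M : E →L[ℝ] E) (f : E) : Continuous (quadraticEnergy M f) :=
  ((M.continuous.inner continuous_id).div_const 2).sub (continuous_const.inner continuous_id)

lemma tendsto_quadraticEnergy_cocompact [FiniteDimensional ℝ E] (M : E →L[ℝ] E)
    (hpos : ∀ x : E, x ≠ 0 → 0 < ⟪M x, x⟫) (f : E) :
    Tendsto (quadraticEnergy M f) (cocompact E) atTop := by
  obtain ⟨α, hα, hcoer⟩ := exists_pos_mul_sq_norm_le_inner_self M hpos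
  have hlower : ∀ x : E, ‖x‖ * (α / 2 * ‖x‖ - ‖f‖) ≤ quadraticEnergy M f x := fun x => by
    have := real_inner_le_norm f x
    have := hcoer x
    unfold quadraticEnergy
    nlinarith
  have hr : Tendsto (fun r : ℝ => r * (α / 2 * r - ‖f‖)) atTop atTop :=
    tendsto_id.atTop_mul_atTop₀ <|
      tendsto_atTop_add_const_right _ _ (tendsto_id.const_mul_atTop (half_pos hα))
  exact tendsto_atTop_mono hlower (hr.comp tendsto_norm_cocompact_atTop)

lemma exists_isMinOn_quadraticEnergy [FiniteDimensional ℝ E] (M : E →L[ℝ] E)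
    (hpos : ∀ x : E, x ≠ 0 → 0 < ⟪M x, x⟫) (f : E) {K : Set E} (hKne : K.Nonempty)
    (hKcl : IsClosed K) : ∃ Φ ∈ K, IsMinOn (quadraticEnergy M f) K Φ := by
  obtain ⟨x₀, hx₀⟩ := hKne
  refine (continuous_quadraticEnergy M f).continuousOn.exists_isMinOn' hKcl hx₀ ?_
  exact ((tendsto_quadraticEnergy_cocompact M hpos f).eventually_ge_atTop _).filter_mono
    inf_le_left

lemma hasFDerivAt_quadraticEnergy (M : E →L[ℝ] E) (hsym : ∀ x y : E, ⟪M x, y⟫ = ⟪x, M y⟫)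
    (f x : E) : HasFDerivAt (quadraticEnergy M f) (innerSL ℝ (M x - f)) x := by
  have hJ : quadraticEnergy M f = fun y => (1 / 2 : ℝ) • ⟪M y, id y⟫ - innerSL ℝ f y := by
    funext y
    simp only [quadraticEnergy, smul_eq_mul, id, innerSL_apply_apply]
    ring
  rw [hJ]
  refine (((M.hasFDerivAt.inner ℝ (hasFDerivAt_id x)).const_smul (1 / 2 : ℝ)).sub
    (innerSL ℝ f).hasFDerivAt).congr_fderiv ?_
  ext h
  simp [fderivInnerCLM_apply, hsym h x, real_inner_comm]
  ring

lemma inner_sub_nonneg_of_isMinOn_quadraticEnergy (M : E →L[ℝ] E)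
    (hsym : ∀ x y : E, ⟪M x, y⟫ = ⟪x, M y⟫) (f : E) {K : Set E} (hKco : Convex ℝ K) {Φ : E}
    (hΦ : Φ ∈ K) (hmin : IsMinOn (quadraticEnergy M f) K Φ) :
    ∀ V ∈ K, 0 ≤ ⟪M Φ - f, V - Φ⟫ := fun V hV =>
  hmin.localize.hasFDerivWithinAt_nonneg
    (hasFDerivAt_quadraticEnergy M hsym f Φ).hasFDerivWithinAt
    (mem_posTangentConeAt_of_segment_subset (by simpa using hKco.segment_subset hΦ hV))

lemma eq_of_inner_sub_nonneg (M : E →L[ℝ] E) (hpos : ∀ x : E, x ≠ 0 → 0 < ⟪M x, x⟫)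
    {f Φ Ψ : E} (hΦ : 0 ≤ ⟪M Φ - f, Ψ - Φ⟫) (hΨ : 0 ≤ ⟪M Ψ - f, Φ - Ψ⟫) : Φ = Ψ := by
  by_contra hne
  have hsum : ⟪M (Ψ - Φ), Ψ - Φ⟫ = -(⟪M Φ - f, Ψ - Φ⟫ + ⟪M Ψ - f, Φ - Ψ⟫) := by
    rw [← neg_sub Ψ Φ, inner_neg_right, map_sub, inner_sub_left, inner_sub_left, inner_sub_left]
    ring
  linarith [hpos _ (sub_ne_zero.mpr (Ne.symm hne))]

theorem existsUnique_variationalInequality [FiniteDimensional ℝ E] (M : E →L[ℝ] E)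
    (hsym : ∀ x y : E, ⟪M x, y⟫ = ⟪x, M y⟫) (hpos : ∀ x : E, x ≠ 0 → 0 < ⟪M x, x⟫) (f : E)
    {K : Set E} (hKne : K.Nonempty) (hKcl : IsClosed K) (hKco : Convex ℝ K) :
    ∃! Φ, Φ ∈ K ∧ ∀ V ∈ K, 0 ≤ ⟪M Φ - f, V - Φ⟫ := by
  obtain ⟨Φ, hΦ, hmin⟩ := exists_isMinOn_quadraticEnergy M hpos f hKne hKcl
  refine ⟨Φ, ⟨hΦ, inner_sub_nonneg_of_isMinOn_quadraticEnergy M hsym f hKco hΦ hmin⟩, ?_⟩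
  rintro Ψ ⟨hΨ, hΨvi⟩
  exact eq_of_inner_sub_nonneg M hpos (hΨvi Φ hΦ)
    (inner_sub_nonneg_of_isMinOn_quadraticEnergy M hsym f hKco hΦ hmin Ψ hΨ)

end VariationalInequality

section SaddlePoint

variable {E F : Type*} [NormedAddCommGroup E] [InnerProductSpace ℝ E]
  [NormedAddCommGroup F] [InnerProductSpace ℝ F]

open ContinuousLinearMap

lemma ContinuousLinearEquiv.inner_symm_apply_comm (C : F ≃L[ℝ] F)
    (hsym : ∀ x y : F, ⟪C x, y⟫ = ⟪x, C y⟫) (x y : F) : ⟪C.symm x, y⟫ = ⟪x, C.symm y⟫ := by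
  simpa using (hsym (C.symm x) (C.symm y)).symm

lemma ContinuousLinearEquiv.inner_symm_apply_self_nonneg (C : F ≃L[ℝ] F)
    (hnonneg : ∀ x : F, 0 ≤ ⟪C x, x⟫) (x : F) : 0 ≤ ⟪C.symm x, x⟫ := by
  rw [real_inner_comm]
  simpa using hnonneg (C.symm x)

variable [CompleteSpace E] [CompleteSpace F]

/-- `A + Bᵀ C⁻¹ B` is the Schur complement of `-C` in the saddle point operator
`[[A, Bᵀ], [B, -C]]`. -/
noncomputable def schurComplement (A : E →L[ℝ] E) (B : E →L[ℝ] F) (C : F ≃L[ℝ] F) :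
    E →L[ℝ] E :=
  A + adjoint B ∘L (C.symm : F →L[ℝ] F) ∘L B

variable (A : E →L[ℝ] E) (B : E →L[ℝ] F) (C : F ≃L[ℝ] F)

lemma schurComplement_apply (x : E) :
    schurComplement A B C x = A x + adjoint B (C.symm (B x)) := rfl

lemma inner_schurComplement_comm (hAsym : ∀ x y : E, ⟪A x, y⟫ = ⟪x, A y⟫)
    (hCsym : ∀ x y : F, ⟪C x, y⟫ = ⟪x, C y⟫) (x y : E) :
    ⟪schurComplement A B C x, y⟫ = ⟪x, schurComplement A B C y⟫ := by
  simp only [schurComplement_apply, inner_add_left, inner_add_right, hAsym, adjoint_inner_left,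
    adjoint_inner_right, C.inner_symm_apply_comm hCsym]

lemma inner_schurComplement_self_pos (hApos : ∀ x : E, x ≠ 0 → 0 < ⟪A x, x⟫)
    (hCnonneg : ∀ x : F, 0 ≤ ⟪C x, x⟫) (x : E) (hx : x ≠ 0) : 0 < ⟪schurComplement A B C x, x⟫ := by
  rw [schurComplement_apply, inner_add_left, adjoint_inner_left]
  linarith [hApos x hx, C.inner_symm_apply_self_nonneg hCnonneg (B x)]

lemma saddlePoint_iff (f : E) (g : F) (K : Set E) (p : E × F) :
    (p.1 ∈ K ∧ (∀ V ∈ K, 0 ≤ ⟪A p.1 + adjoint B p.2 - f, V - p.1⟫) ∧ B p.1 - C p.2 = g) ↔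
      p.2 = C.symm (B p.1 - g) ∧ p.1 ∈ K ∧
        ∀ V ∈ K, 0 ≤ ⟪schurComplement A B C p.1 - (f + adjoint B (C.symm g)), V - p.1⟫ := by
  obtain ⟨Φ, Θ⟩ := p
  dsimp only
  have hΘ : B Φ - C Θ = g ↔ Θ = C.symm (B Φ - g) := by
    rw [C.eq_symm_apply, sub_eq_iff_eq_add, ← sub_eq_iff_eq_add', eq_comm]
  have hres : A Φ + adjoint B (C.symm (B Φ - g)) - f =
      schurComplement A B C Φ - (f + adjoint B (C.symm g)) := by
    rw [schurComplement_apply, map_sub, map_sub]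
    abel
  constructor
  · rintro ⟨hΦ, hvi, heq⟩
    obtain rfl := hΘ.mp heq
    exact ⟨rfl, hΦ, hres ▸ hvi⟩
  · rintro ⟨rfl, hΦ, hvi⟩
    exact ⟨hΦ, hres ▸ hvi, hΘ.mpr rfl⟩

theorem existsUnique_saddlePoint [FiniteDimensional ℝ E]
    (hAsym : ∀ x y : E, ⟪A x, y⟫ = ⟪x, A y⟫) (hApos : ∀ x : E, x ≠ 0 → 0 < ⟪A x, x⟫)
    (hCsym : ∀ x y : F, ⟪C x, y⟫ = ⟪x, C y⟫) (hCnonneg : ∀ x : F, 0 ≤ ⟪C x, x⟫)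
    (f : E) (g : F) {K : Set E} (hKne : K.Nonempty) (hKcl : IsClosed K) (hKco : Convex ℝ K) :
    ∃! p : E × F, p.1 ∈ K ∧ (∀ V ∈ K, 0 ≤ ⟪A p.1 + adjoint B p.2 - f, V - p.1⟫) ∧
      B p.1 - C p.2 = g := by
  simp only [saddlePoint_iff]
  obtain ⟨Φ, hΦ, huniq⟩ := existsUnique_variationalInequality (schurComplement A B C)
    (inner_schurComplement_comm A B C hAsym hCsym)
    (inner_schurComplement_self_pos A B C hApos hCnonneg)
    (f + adjoint B (C.symm g)) hKne hKcl hKco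
  refine ⟨(Φ, C.symm (B Φ - g)), ⟨rfl, hΦ⟩, ?_⟩
  rintro ⟨Ψ, Θ⟩ ⟨hΘ, hΨ⟩
  obtain rfl := huniq Ψ hΨ
  exact Prod.ext rfl hΘ

end SaddlePoint

theorem stmt_0 {m n : ℕ}
    (A : EuclideanSpace ℝ (Fin m) →L[ℝ] EuclideanSpace ℝ (Fin m))
    (hAsym : ∀ x y : EuclideanSpace ℝ (Fin m), ⟪A x, y⟫ = ⟪x, A y⟫)
    (hApos : ∀ x : EuclideanSpace ℝ (Fin m), x ≠ 0 → 0 < ⟪A x, x⟫)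
    (B : EuclideanSpace ℝ (Fin m) →L[ℝ] EuclideanSpace ℝ (Fin n))
    (C : EuclideanSpace ℝ (Fin n) →L[ℝ] EuclideanSpace ℝ (Fin n))
    (hCsym : ∀ x y : EuclideanSpace ℝ (Fin n), ⟪C x, y⟫ = ⟪x, C y⟫)
    (hCpos : ∀ x : EuclideanSpace ℝ (Fin n), x ≠ 0 → 0 < ⟪C x, x⟫)
    (F : EuclideanSpace ℝ (Fin m)) (G : EuclideanSpace ℝ (Fin n))
    (K : Set (EuclideanSpace ℝ (Fin m)))
    (hKne : K.Nonempty) (hKcl : IsClosed K) (hKco : Convex ℝ K) :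
    ∃! p : EuclideanSpace ℝ (Fin m) × EuclideanSpace ℝ (Fin n),
      p.1 ∈ K ∧
      (∀ V ∈ K, 0 ≤ ⟪A p.1 + (ContinuousLinearMap.adjoint B) p.2 - F, V - p.1⟫) ∧
      B p.1 - C p.2 = G := by
  have hCnonneg (x : EuclideanSpace ℝ (Fin n)) : 0 ≤ ⟪C x, x⟫ := by
    rcases eq_or_ne x 0 with rfl | hx
    · simp
    · exact (hCpos x hx).le
  have hCinj : Function.Injective C := by
    refine (injective_iff_map_eq_zero C).mpr fun x hx => ?_
    by_contra hx0
    simpa [hx] using hCpos x hx0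
  let Ce := (LinearEquiv.ofInjectiveEndo C.toLinearMap hCinj).toContinuousLinearEquiv
  exact existsUnique_saddlePoint A B Ce hAsym hApos hCsym hCnonneg F G hKne hKcl hKco
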